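/- arXiv:2211.03232 — 8 statements merged into one kernel-verified Lean document; each statement's English description precedes it below -/
import Mathlib

section
/- Let m ≥ 1, let ε ≥ 0, and let D be a probability distribution on {0,1}^m that is an ε-biased sample space. Then for any two vectors x, y ∈ ℤ^m with x ≠ y, the probability over a drawn from D that ⟨a, x⟩ = ⟨a, y⟩ (inner products taken over the integers, viewing a as a 0/1 integer vector) is at most 1/2 + ε/2. -/
/-!
Put `z = x - y ≠ 0` and divide `z` by the gcd of its entries: the resulting `w` has an odd
entry, and `⟨a, x⟩ = ⟨a, y⟩` forces `⟨a, w⟩ = 0`, hence `⟨a, w⟩ ≡ ∑_{i ∈ I} aᵢ ≡ 0 (mod 2)` for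
the nonempty set `I` of odd entries of `w`. So a collision lies in the event "the parity over
`I` is even", whose probability is `(1 + bias)/2 ≤ 1/2 + ε/2`.
-/

open Finset

variable {ι : Type*}

theorem Finset.exists_odd_of_gcd_eq_one {s : Finset ι} {w : ι → ℤ} (hw : s.gcd w = 1) :
    ∃ i ∈ s, Odd (w i) := by
  by_contra! h
  have : (2 : ℤ) ∣ s.gcd w :=
    Finset.dvd_gcd fun i hi => (Int.not_odd_iff_even.mp (h i hi)).two_dvd
  rw [hw] at this
  norm_num at this

variable [Fintype ι]

theorem sum_ite_modEq_sum_filter_odd (w : ι → ℤ) (a : ι → Bool) :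
    ∑ i, (if a i then w i else 0) ≡
      ∑ i ∈ univ.filter (fun i => Odd (w i)), (if a i then 1 else 0) [ZMOD 2] := by
  rw [sum_filter]
  refine Int.ModEq.sum fun i _ => ?_
  by_cases hw : Odd (w i)
  · simp only [hw, if_true]
    split_ifs
    exacts [Int.odd_iff.mp hw, rfl]
  · simp only [hw, if_false]
    split_ifs
    exacts [Int.even_iff.mp (Int.not_odd_iff_even.mp hw), rfl]

theorem exists_parity_even_of_sum_ite_eq_zero {z : ι → ℤ} (hz : z ≠ 0) :
    ∃ I : Finset ι, I.Nonempty ∧ ∀ a : ι → Bool, ∑ i, (if a i then z i else 0) = 0 →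
      (∑ i ∈ I, if a i then (1 : ℤ) else 0) % 2 = 0 := by
  obtain ⟨j, hj⟩ := Function.ne_iff.mp hz
  obtain ⟨w, hzw, hw⟩ := extract_gcd z (univ_nonempty_iff.mpr ⟨j⟩)
  have hgcd : univ.gcd z ≠ 0 := fun h => hj (gcd_eq_zero_iff.mp h j (mem_univ j))
  obtain ⟨i, -, hi⟩ := exists_odd_of_gcd_eq_one hw
  refine ⟨univ.filter (fun i => Odd (w i)), ⟨i, by simpa using hi⟩, fun a ha => ?_⟩
  have hwa : ∑ i, (if a i then w i else 0) = 0 := by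
    have : ∑ i, (if a i then z i else 0) = univ.gcd z * ∑ i, (if a i then w i else 0) := by
      rw [mul_sum]
      exact sum_congr rfl fun i hi => by rw [hzw i hi, mul_ite, mul_zero]
    simpa [ha, hgcd] using this
  have := sum_ite_modEq_sum_filter_odd w a
  rw [hwa] at this
  exact this.symm

theorem sum_filter_le_half_add_half_of_abs_sub_le {α : Type*} [Fintype α] {D : α → ℝ}
    (hD1 : ∑ a, D a = 1) (p : α → Prop) [DecidablePred p] {ε : ℝ}
    (hbias : |∑ a ∈ univ.filter p, D a - ∑ a ∈ univ.filter (fun a => ¬p a), D a| ≤ ε) :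
    ∑ a ∈ univ.filter p, D a ≤ 1 / 2 + ε / 2 := by
  have hsplit := sum_filter_add_sum_filter_not univ p D
  linarith [(abs_le.mp hbias).2]

theorem eps_biased_inner_product_collision_general
    (m : ℕ) (ε : ℝ)
    (D : (Fin m → Bool) → ℝ)
    (hD0 : ∀ a, 0 ≤ D a) (hD1 : ∑ a, D a = 1)
    (hbias : ∀ I : Finset (Fin m), I.Nonempty →
      |(∑ a ∈ univ.filter (fun a : Fin m → Bool =>
            (∑ i ∈ I, (if a i then (1 : ℤ) else 0)) % 2 = 0), D a) -
        (∑ a ∈ univ.filter (fun a : Fin m → Bool =>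
            (∑ i ∈ I, (if a i then (1 : ℤ) else 0)) % 2 = 1), D a)| ≤ ε)
    (x y : Fin m → ℤ) (hxy : x ≠ y) :
    (∑ a ∈ univ.filter (fun a : Fin m → Bool =>
        (∑ i, (if a i then x i else 0)) = ∑ i, (if a i then y i else 0)), D a)
      ≤ 1 / 2 + ε / 2 := by
  obtain ⟨I, hI, hparity⟩ := exists_parity_even_of_sum_ite_eq_zero (sub_ne_zero.mpr hxy)
  have hcollision : univ.filter (fun a : Fin m → Bool =>
        (∑ i, (if a i then x i else 0)) = ∑ i, (if a i then y i else 0)) ⊆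
      univ.filter (fun a : Fin m → Bool => (∑ i ∈ I, (if a i then (1 : ℤ) else 0)) % 2 = 0) := by
    intro a ha
    simp only [mem_filter, mem_univ, true_and] at ha ⊢
    rw [← sub_eq_zero, ← sum_sub_distrib] at ha
    exact hparity a (by simpa only [Pi.sub_apply, ite_sub_ite, sub_zero] using ha)
  have hodd : univ.filter (fun a : Fin m → Bool =>
        (∑ i ∈ I, (if a i then (1 : ℤ) else 0)) % 2 = 1) =
      univ.filter (fun a => ¬(∑ i ∈ I, (if a i then (1 : ℤ) else 0)) % 2 = 0) := by
    simp only [Int.emod_two_ne_zero]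
  have := hbias I hI
  rw [hodd] at this
  exact (sum_le_sum_of_subset_of_nonneg hcollision fun a _ _ => hD0 a).trans
    (sum_filter_le_half_add_half_of_abs_sub_le hD1 _ this)

/-- If `D` is an ε-biased probability distribution on `{0,1}^m`, then for any
distinct integer vectors `x y : ℤ^m`, the probability (under `D`) that the integer inner
products `⟨a,x⟩` and `⟨a,y⟩` coincide is at most `1/2 + ε/2`. -/
theorem eps_biased_inner_product_collision
    (m : ℕ) (hm : 1 ≤ m) (ε : ℝ) (hε : 0 ≤ ε)
    (D : (Fin m → Bool) → ℝ)
    (hD0 : ∀ a, 0 ≤ D a) (hD1 : ∑ a, D a = 1)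
    (hbias : ∀ I : Finset (Fin m), I.Nonempty →
      |(∑ a ∈ univ.filter (fun a : Fin m → Bool =>
            (∑ i ∈ I, (if a i then (1 : ℤ) else 0)) % 2 = 0), D a) -
        (∑ a ∈ univ.filter (fun a : Fin m → Bool =>
            (∑ i ∈ I, (if a i then (1 : ℤ) else 0)) % 2 = 1), D a)| ≤ ε)
    (x y : Fin m → ℤ) (hxy : x ≠ y) :
    (∑ a ∈ univ.filter (fun a : Fin m → Bool =>
        (∑ i, (if a i then x i else 0)) = ∑ i, (if a i then y i else 0)), D a)
      ≤ 1 / 2 + ε / 2 :=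
  eps_biased_inner_product_collision_general m ε D hD0 hD1 hbias x y hxy
end

section
/- Let n, m be positive integers and let F be a prime with F > 2n. Let S and T be two distinct multisets of elements of {0,1,…,m−1}, each of cardinality at most n. If a : {0,1,…,m−1} → ℤ/Fℤ is chosen uniformly at random, then the probability that Σ_{i∈S} a(i) = Σ_{i∈T} a(i) (sums over the multisets, computed in ℤ/Fℤ) is at most 1/F. -/
/-!
Writing `c i = count_S i - count_T i`, a collision is the linear equation `∑ i, c i * a i = 0`
over the field `ZMod F`. Since the counts are at most `n < F`, some coefficient `c i₀` is nonzero
in `ZMod F`, so on the solution set `a i₀` is determined by the other coordinates: there are at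
most `F ^ (m - 1)` solutions among the `F ^ m` maps.
-/

open Finset

theorem Multiset.sum_map_eq_sum_count_mul {ι R : Type*} [Fintype ι] [DecidableEq ι]
    [Semiring R] (S : Multiset ι) (a : ι → R) :
    (S.map a).sum = ∑ i, (S.count i : R) * a i := by
  rw [Finset.sum_multiset_map_count, Finset.sum_subset (subset_univ S.toFinset)]
  · simp only [nsmul_eq_mul]
  · intro i _ hi
    rw [Multiset.count_eq_zero_of_notMem (by simpa using hi), zero_smul]

theorem Multiset.sum_map_sub_sum_map {ι R : Type*} [Fintype ι] [DecidableEq ι]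
    [CommRing R] (S T : Multiset ι) (a : ι → R) :
    (S.map a).sum - (T.map a).sum = ∑ i, ((S.count i : R) - T.count i) * a i := by
  simp only [Multiset.sum_map_eq_sum_count_mul, sub_mul, sum_sub_distrib]

theorem Multiset.exists_count_ne {α : Type*} [DecidableEq α] {S T : Multiset α} (h : S ≠ T) :
    ∃ i, S.count i ≠ T.count i := by
  contrapose! h
  exact Multiset.ext.2 h

theorem ZMod.natCast_ne_natCast_of_lt {F a b : ℕ} (ha : a < F) (hb : b < F) (hab : a ≠ b) :
    (a : ZMod F) ≠ b := by
  rwa [Ne, ZMod.natCast_eq_natCast_iff', Nat.mod_eq_of_lt ha, Nat.mod_eq_of_lt hb]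

section LinearEquation

variable {ι K : Type*} [Fintype ι] [DecidableEq ι] [Field K]

theorem injOn_restrict_ne_of_sum_mul_eq_zero {c : ι → K} {i₀ : ι} (hc : c i₀ ≠ 0) :
    Set.InjOn (fun (a : ι → K) (j : {j // j ≠ i₀}) => a j) {a | ∑ i, c i * a i = 0} := by
  rintro a (ha : ∑ i, c i * a i = 0) b (hb : ∑ i, c i * b i = 0) hab
  have hoff (j : ι) (hj : j ≠ i₀) : a j = b j := congrFun hab ⟨j, hj⟩
  have hdiff : ∑ i, c i * (a i - b i) = 0 := by
    simp only [mul_sub, sum_sub_distrib, ha, hb, sub_self]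
  rw [sum_eq_single i₀ (fun j _ hj => by rw [hoff j hj, sub_self, mul_zero]) (by simp)] at hdiff
  funext j
  by_cases hj : j = i₀
  · subst hj
    exact sub_eq_zero.1 ((mul_eq_zero.1 hdiff).resolve_left hc)
  · exact hoff j hj

theorem card_filter_sum_mul_eq_zero_mul_card_le [Fintype K] [DecidableEq K] {c : ι → K}
    {i₀ : ι} (hc : c i₀ ≠ 0) :
    #{a : ι → K | ∑ i, c i * a i = 0} * Fintype.card K ≤ Fintype.card K ^ Fintype.card ι := by
  have : Nonempty ι := ⟨i₀⟩
  calc #{a : ι → K | ∑ i, c i * a i = 0} * Fintype.card K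
      ≤ Fintype.card ({j // j ≠ i₀} → K) * Fintype.card K := by
        gcongr
        exact card_le_card_of_injOn _ (fun _ _ => mem_coe.2 (mem_univ _))
          (by simpa using injOn_restrict_ne_of_sum_mul_eq_zero hc)
    _ = Fintype.card K ^ Fintype.card ι := by
        rw [Fintype.card_fun, Fintype.card_subtype_compl, Fintype.card_subtype_eq,
          pow_sub_one_mul Fintype.card_ne_zero]

end LinearEquation

theorem random_map_multiset_sum_collision_general
    (n m F : ℕ) (hF : Nat.Prime F) (hFn : 2 * n < F)
    [NeZero F]
    (S T : Multiset (Fin m)) (hST : S ≠ T)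
    (hScard : Multiset.card S ≤ n) (hTcard : Multiset.card T ≤ n) :
    ((univ.filter (fun a : Fin m → ZMod F =>
        (S.map a).sum = (T.map a).sum)).card : ℝ) / (F ^ m : ℝ) ≤ 1 / F := by
  have := Fact.mk hF
  have hcount_lt {U : Multiset (Fin m)} (hU : Multiset.card U ≤ n) (i : Fin m) :
      U.count i < F := by
    grw [Multiset.count_le_card, hU]; omega
  obtain ⟨i₀, hi₀⟩ := Multiset.exists_count_ne hST
  have hcard := card_filter_sum_mul_eq_zero_mul_card_le
    (c := fun i => (S.count i : ZMod F) - T.count i) (i₀ := i₀) <| sub_ne_zero.2 <|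
      ZMod.natCast_ne_natCast_of_lt (hcount_lt hScard i₀) (hcount_lt hTcard i₀) hi₀
  simp only [← Multiset.sum_map_sub_sum_map, sub_eq_zero, ZMod.card, Fintype.card_fin] at hcard
  have hF₀ : (0 : ℝ) < F := by exact_mod_cast hF.pos
  rw [div_le_div_iff₀ (pow_pos hF₀ m) hF₀, one_mul]
  exact_mod_cast hcard

/-- Let `F > 2n` be a prime, and `S ≠ T` two multisets over `{0,…,m−1}` of
cardinality at most `n`. For `a : Fin m → ZMod F` uniformly random, the probability that
the sums `∑_{i∈S} a i` and `∑_{i∈T} a i` (in `ZMod F`) coincide is at most `1/F`. -/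
theorem random_map_multiset_sum_collision
    (n m F : ℕ) (hn : 1 ≤ n) (hm : 1 ≤ m) (hF : Nat.Prime F) (hFn : 2 * n < F)
    [NeZero F]
    (S T : Multiset (Fin m)) (hST : S ≠ T)
    (hScard : Multiset.card S ≤ n) (hTcard : Multiset.card T ≤ n) :
    ((univ.filter (fun a : Fin m → ZMod F =>
        (S.map a).sum = (T.map a).sum)).card : ℝ) / (F ^ m : ℝ) ≤ 1 / F :=
  random_map_multiset_sum_collision_general n m F hF hFn S T hST hScard hTcard
end

section
/- Let F be an odd positive integer. For every real z ∈ [0, 2F], one has TW_F(z) = TW_{F/2}(z) if and only if z ∈ [0, F/2] ∪ [3F/2, 2F]. Moreover, for every integer z with 0 ≤ z < 2F and z ∉ [0, F/2] ∪ [3F/2, 2F] (equivalently (F+1)/2 ≤ z ≤ (3F−1)/2), one has TW_F(z) − TW_{F/2}(z) ≥ 1. -/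
/-!
On `[0, 2F]` the wave `TW_F` is the single tent `min z (2F - z)`, while `TW_{F/2}`, having period
`F`, consists of two tents of half the height.  Their difference is therefore the tent
`max 0 (F - 2|z - F|)` centred at `F`, which vanishes exactly when `|z - F| ≥ F/2`.  For integers
`z` and `F` with `2|z - F| < F`, integrality forces `2|z - F| ≤ F - 1`, so the difference is at
least `1`.
-/

/-- `rmod z P` is the representative of `z` modulo `P` in `[0, P)` (for `P > 0`). -/
noncomputable def rmod (z P : ℝ) : ℝ := z - P * ⌊z / P⌋

/-- The triangular wave `TW_P(z) = T_P(z mod 2P)`, where `T_P(x) = x` for `x ≤ P` and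
`T_P(x) = 2P − x` for `x > P`. -/
noncomputable def TW (P z : ℝ) : ℝ :=
  if rmod z (2 * P) ≤ P then rmod z (2 * P) else 2 * P - rmod z (2 * P)

theorem rmod_add_self (z P : ℝ) : rmod (z + P) P = rmod z P := by
  rcases eq_or_ne P 0 with rfl | hP
  · simp [rmod]
  · rw [rmod, rmod, add_div, div_self hP, Int.floor_add_one]
    push_cast
    ring

theorem rmod_eq_self {z P : ℝ} (h0 : 0 ≤ z) (h1 : z < P) : rmod z P = z := by
  have hP : 0 < P := h0.trans_lt h1
  rw [rmod, Int.floor_eq_zero_iff.mpr ⟨div_nonneg h0 hP.le, (div_lt_one hP).mpr h1⟩]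
  simp

theorem TW_add_two_mul_self (P z : ℝ) : TW P (z + 2 * P) = TW P z := by
  rw [TW, TW, rmod_add_self]

theorem TW_eq_min {P z : ℝ} (h0 : 0 ≤ z) (h2 : z ≤ 2 * P) : TW P z = min z (2 * P - z) := by
  rcases h2.lt_or_eq with h2 | rfl
  · rw [TW, rmod_eq_self h0 h2]
    split_ifs with h
    · exact (min_eq_left (by linarith)).symm
    · exact (min_eq_right (by linarith)).symm
  · have h := TW_add_two_mul_self P 0
    rw [zero_add] at h
    rw [h, sub_self, min_eq_right h0]
    simp [TW, rmod, show 0 ≤ P by linarith]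

theorem TW_sub_TW_half {F z : ℝ} (hz : z ∈ Set.Icc 0 (2 * F)) :
    TW F z - TW (F / 2) z = max 0 (F - 2 * |z - F|) := by
  obtain ⟨h0, h2⟩ := hz
  rw [TW_eq_min h0 h2]
  rcases le_total z F with h | h
  · rw [TW_eq_min h0 (by linarith), abs_of_nonpos (by linarith)]
    simp only [min_def, max_def]
    split_ifs <;> linarith
  · have hper : TW (F / 2) z = TW (F / 2) (z - F) := by
      rw [← TW_add_two_mul_self (F / 2) (z - F)]
      ring_nf
    rw [hper, TW_eq_min (by linarith) (by linarith), abs_of_nonneg (by linarith)]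
    simp only [min_def, max_def]
    split_ifs <;> linarith

theorem mem_Icc_union_Icc_iff_le_abs {F z : ℝ} (hz : z ∈ Set.Icc 0 (2 * F)) :
    z ∈ Set.Icc 0 (F / 2) ∪ Set.Icc (3 * F / 2) (2 * F) ↔ F / 2 ≤ |z - F| := by
  obtain ⟨h0, h2⟩ := hz
  simp only [Set.mem_union, Set.mem_Icc, le_abs]
  constructor
  · rintro (h | h)
    · right; linarith
    · left; linarith
  · rintro (h | h)
    · right; constructor <;> linarith
    · left; constructor <;> linarith

theorem triangular_wave_comparison_general (F : ℕ) :
    (∀ z : ℝ, z ∈ Set.Icc (0 : ℝ) (2 * F) →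
      (TW (F : ℝ) z = TW ((F : ℝ) / 2) z ↔
        z ∈ Set.Icc (0 : ℝ) ((F : ℝ) / 2) ∪ Set.Icc (3 * (F : ℝ) / 2) (2 * F))) ∧
    (∀ z : ℤ, 0 ≤ z → z < 2 * F →
      (z : ℝ) ∉ Set.Icc (0 : ℝ) ((F : ℝ) / 2) ∪ Set.Icc (3 * (F : ℝ) / 2) (2 * F) →
      1 ≤ TW (F : ℝ) (z : ℝ) - TW ((F : ℝ) / 2) (z : ℝ)) := by
  refine ⟨fun z hz => ?_, fun z hz0 hz2 hz => ?_⟩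
  · rw [← sub_eq_zero, TW_sub_TW_half hz, mem_Icc_union_Icc_iff_le_abs hz, max_eq_left_iff]
    constructor <;> intro h <;> linarith
  · have hzI : (z : ℝ) ∈ Set.Icc 0 (2 * (F : ℝ)) :=
      ⟨by exact_mod_cast hz0, by exact_mod_cast hz2.le⟩
    rw [mem_Icc_union_Icc_iff_le_abs hzI, not_le] at hz
    have hle : 2 * |(z : ℝ) - F| + 1 ≤ F := by
      have hlt : 2 * |z - (F : ℤ)| < F := by
        exact_mod_cast (by linarith : 2 * |(z : ℝ) - F| < F)
      exact_mod_cast Int.add_one_le_of_lt hlt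
    rw [TW_sub_TW_half hzI]
    exact le_max_of_le_right (by linarith)

/-- For an odd positive integer `F`: for every real `z ∈ [0, 2F]`,
`TW_F(z) = TW_{F/2}(z)` iff `z ∈ [0, F/2] ∪ [3F/2, 2F]`; moreover, for every integer `z`
with `0 ≤ z < 2F` not lying in that union, `TW_F(z) − TW_{F/2}(z) ≥ 1`. -/
theorem triangular_wave_comparison (F : ℕ) (hF : 0 < F) (hodd : Odd F) :
    (∀ z : ℝ, z ∈ Set.Icc (0 : ℝ) (2 * F) →
      (TW (F : ℝ) z = TW ((F : ℝ) / 2) z ↔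
        z ∈ Set.Icc (0 : ℝ) ((F : ℝ) / 2) ∪ Set.Icc (3 * (F : ℝ) / 2) (2 * F))) ∧
    (∀ z : ℤ, 0 ≤ z → z < 2 * F →
      (z : ℝ) ∉ Set.Icc (0 : ℝ) ((F : ℝ) / 2) ∪ Set.Icc (3 * (F : ℝ) / 2) (2 * F) →
      1 ≤ TW (F : ℝ) (z : ℝ) - TW ((F : ℝ) / 2) (z : ℝ)) :=
  triangular_wave_comparison_general F
end

section
/- Let F be a positive integer. For every nonnegative integer z, let c(z) = 0 if (z mod 2F) ≤ F − 1 and c(z) = 1 if F ≤ (z mod 2F) ≤ 2F − 1. Then z mod F = ReLU(2F·c(z) − 2·TW_F(z)) − F·c(z) + TW_F(z), where ReLU(t) = max(0, t). -/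
/-!
Write `r = z mod 2F`. On the rising half-period `r < F` one has `z mod F = r = TW_F(z)` and
`c(z) = 0`, so the ReLU term is `max 0 (-2r) = 0`. On the falling half-period `F ≤ r < 2F` one has
`z mod F = r - F`, `TW_F(z) = 2F - r` and `c(z) = 1`, so the ReLU term is `2(r - F) ≥ 0`, and the
right-hand side is `2(r - F) - F + (2F - r) = r - F`.
-/

theorem rmod_natCast (z m : ℕ) : rmod z m = ((z % m : ℕ) : ℝ) := by
  rw [rmod, ← Int.natCast_floor_eq_floor (by positivity), Nat.floor_div_eq_div]
  have hdiv : (m : ℝ) * (z / m : ℕ) + (z % m : ℕ) = z := by exact_mod_cast Nat.div_add_mod z m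
  rw [Int.cast_natCast]
  linarith

theorem rmod_natCast_two_mul (z F : ℕ) : rmod z (2 * F) = ((z % (2 * F) : ℕ) : ℝ) := by
  exact_mod_cast rmod_natCast z (2 * F)

theorem TW_natCast_of_mod_le {F z : ℕ} (h : z % (2 * F) ≤ F) :
    TW F z = ((z % (2 * F) : ℕ) : ℝ) := by
  rw [TW, rmod_natCast_two_mul, if_pos (by exact_mod_cast h)]

theorem TW_natCast_of_le_mod {F z : ℕ} (h : F ≤ z % (2 * F)) :
    TW F z = 2 * F - ((z % (2 * F) : ℕ) : ℝ) := by
  rw [TW, rmod_natCast_two_mul]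
  split_ifs with hle
  · have : ((z % (2 * F) : ℕ) : ℝ) = F := le_antisymm hle (by exact_mod_cast h)
    linarith
  · rfl

theorem Nat.mod_eq_mod_two_mul_of_lt {F z : ℕ} (h : z % (2 * F) < F) :
    z % F = z % (2 * F) := by
  rw [← Nat.mod_mod_of_dvd z (dvd_mul_left F 2), Nat.mod_eq_of_lt h]

theorem Nat.mod_eq_mod_two_mul_sub_of_le {F z : ℕ} (hF : 0 < F) (h : F ≤ z % (2 * F)) :
    z % F = z % (2 * F) - F := by
  have hlt : z % (2 * F) < 2 * F := Nat.mod_lt z (by omega)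
  rw [← Nat.mod_mod_of_dvd z (dvd_mul_left F 2), Nat.mod_eq_sub_mod h, Nat.mod_eq_of_lt (by omega)]

/-- For a positive integer `F` and nonnegative integer `z`, with
`c(z) = 0` if `z mod 2F ≤ F − 1` and `c(z) = 1` otherwise, one has
`z mod F = ReLU(2F·c(z) − 2·TW_F(z)) − F·c(z) + TW_F(z)`, where `ReLU(t) = max(0,t)`. -/
theorem mod_eq_relu_triangular_wave (F : ℕ) (hF : 0 < F) (z : ℕ) :
    ((z % F : ℕ) : ℝ) =
      max 0 (2 * (F : ℝ) * (if z % (2 * F) ≤ F - 1 then (0 : ℝ) else 1)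
          - 2 * TW (F : ℝ) (z : ℝ))
        - (F : ℝ) * (if z % (2 * F) ≤ F - 1 then (0 : ℝ) else 1) + TW (F : ℝ) (z : ℝ) := by
  split_ifs with hc
  · have hlt : z % (2 * F) < F := by omega
    rw [TW_natCast_of_mod_le hlt.le, Nat.mod_eq_mod_two_mul_of_lt hlt,
      max_eq_left (by simp)]
    ring
  · have hle : F ≤ z % (2 * F) := by omega
    have hr : (F : ℝ) ≤ (z % (2 * F) : ℕ) := by exact_mod_cast hle
    rw [TW_natCast_of_le_mod hle, Nat.mod_eq_mod_two_mul_sub_of_le hF hle, Nat.cast_sub hle,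
      max_eq_right (by linarith)]
    ring
end

section
/- Let F ≥ 2 and n ≥ 1 be natural numbers and let N = Σ_{i=0}^n C(i+F−1, i) be the number of multisets of a set of size F having at most n elements. Let R be any type, let f be any function from multisets over {0,…,F−1} of cardinality at most n to R, and let Φ be any finite set of functions from R to {0,…,F−1} with |Φ| < log N / log F. Then there exist two distinct multisets A ≠ B over {0,…,F−1}, each of cardinality at most n, such that φ(f(A)) = φ(f(B)) for every φ ∈ Φ. -/
/-!
Pigeonhole: `A ↦ (φ (f A))_{φ ∈ Φ}` maps the `N` multisets into `Φ → Fin F`, a set of size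
`F ^ |Φ|`, and `|Φ| < log N / log F` gives `F ^ |Φ| < N`.
-/

open Finset

def Multiset.cardLeEquivSigmaSym (α : Type*) (n : ℕ) :
    {S : Multiset α // Multiset.card S ≤ n} ≃ Σ i : Fin (n + 1), Sym α i where
  toFun S := ⟨⟨Multiset.card S.1, Nat.lt_succ_of_le S.2⟩, ⟨S.1, rfl⟩⟩
  invFun p := ⟨p.2, p.2.2.trans_le (Nat.lt_succ_iff.mp p.1.2)⟩
  left_inv _ := rfl
  right_inv p := Sigma.subtype_ext (Fin.ext p.2.2) rfl

instance Multiset.fintypeCardLe (α : Type*) [DecidableEq α] [Fintype α] (n : ℕ) :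
    Fintype {S : Multiset α // Multiset.card S ≤ n} :=
  Fintype.ofEquiv _ (Multiset.cardLeEquivSigmaSym α n).symm

theorem Multiset.card_subtype_card_le (α : Type*) [DecidableEq α] [Fintype α] (n : ℕ) :
    Fintype.card {S : Multiset α // Multiset.card S ≤ n} =
      ∑ i ∈ Finset.range (n + 1), (i + Fintype.card α - 1).choose i := by
  rw [Fintype.card_congr (Multiset.cardLeEquivSigmaSym α n), Fintype.card_sigma,
    ← Fin.sum_univ_eq_sum_range (fun i ↦ (i + Fintype.card α - 1).choose i)]
  refine sum_congr rfl fun i _ ↦ ?_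
  rw [Sym.card_sym_eq_choose, add_comm]

theorem Nat.pow_lt_of_lt_log_div_log {b k N : ℕ} (h : (k : ℝ) < Real.log N / Real.log b) :
    b ^ k < N := by
  have hk : (0 : ℝ) ≤ k := k.cast_nonneg
  -- `log 0 = log 1 = 0` and `x / 0 = 0`, so in the degenerate cases `h` reads `k < 0`.
  have hN : (0 : ℝ) < N := by
    rcases N.eq_zero_or_pos with rfl | hN
    · simp only [Nat.cast_zero, Real.log_zero, zero_div] at h
      linarith
    · exact_mod_cast hN
  have hb : (1 : ℝ) < b := by
    rcases Nat.lt_or_ge 1 b with hb | hb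
    · exact_mod_cast hb
    · interval_cases b <;>
        simp only [Nat.cast_zero, Nat.cast_one, Real.log_zero, Real.log_one, div_zero] at h <;>
        linarith
  rw [Real.log_div_log, Real.lt_logb_iff_rpow_lt hb hN, Real.rpow_natCast] at h
  exact_mod_cast h

theorem description_complexity_lower_bound_general
    (F n : ℕ)
    (N : ℕ) (hN : N = ∑ i ∈ Finset.range (n + 1), Nat.choose (i + F - 1) i)
    (R : Type*) (f : {S : Multiset (Fin F) // Multiset.card S ≤ n} → R)
    (Φ : Finset (R → Fin F))
    (hΦ : (Φ.card : ℝ) < Real.log N / Real.log F) :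
    ∃ A B : {S : Multiset (Fin F) // Multiset.card S ≤ n},
      A ≠ B ∧ ∀ φ ∈ Φ, φ (f A) = φ (f B) := by
  classical
  have hcard : Fintype.card (Φ → Fin F) <
      Fintype.card {S : Multiset (Fin F) // Multiset.card S ≤ n} := by
    rw [Multiset.card_subtype_card_le, Fintype.card_fun, Fintype.card_fin, Fintype.card_coe, ← hN]
    exact Nat.pow_lt_of_lt_log_div_log hΦ
  obtain ⟨A, B, hAB, hfAB⟩ :=
    Fintype.exists_ne_map_eq_of_card_lt (fun A (φ : Φ) ↦ φ.1 (f A)) hcard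
  exact ⟨A, B, hAB, fun φ hφ ↦ congrFun hfAB ⟨φ, hφ⟩⟩

/-- Let `N = ∑_{i=0}^n C(i+F−1, i)` be the number of multisets over a set of
size `F` with at most `n` elements. For any function `f` from multisets over `{0,…,F−1}` of
cardinality at most `n` to a type `R`, and any finite set `Φ` of functions `R → {0,…,F−1}`
with `|Φ| < log N / log F`, there are two distinct such multisets `A ≠ B` with
`φ(f(A)) = φ(f(B))` for all `φ ∈ Φ`. -/
theorem description_complexity_lower_bound
    (F n : ℕ) (hF : 2 ≤ F) (hn : 1 ≤ n)
    (N : ℕ) (hN : N = ∑ i ∈ Finset.range (n + 1), Nat.choose (i + F - 1) i)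
    (R : Type*) (f : {S : Multiset (Fin F) // Multiset.card S ≤ n} → R)
    (Φ : Finset (R → Fin F))
    (hΦ : (Φ.card : ℝ) < Real.log N / Real.log F) :
    ∃ A B : {S : Multiset (Fin F) // Multiset.card S ≤ n},
      A ≠ B ∧ ∀ φ ∈ Φ, φ (f A) = φ (f B) :=
  description_complexity_lower_bound_general F n N hN R f Φ hΦ
end

section
/- Let F ≥ 2 and n ≥ 1 be natural numbers, let R be any type, let f be any function from multisets over {0,…,F−1} of cardinality at most n to R, and let Φ be a finite set of functions from R to {0,…,F−1} such that for every pair of distinct multisets A ≠ B over {0,…,F−1}, each of cardinality at most n, there exists φ ∈ Φ with φ(f(A)) ≠ φ(f(B)). Then F^{|Φ|} ≥ (1 + (F−1)/n)^n; equivalently, |Φ| · log F ≥ n · log(1 + (F−1)/n). -/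
/-!
Evaluating all of `Φ` at `f A` gives an injection of the multisets of size exactly `n` over an
`F`-element alphabet into `Φ → Fin F`, so `(F - 1 + n).choose n ≤ F ^ |Φ|`. Writing
`m = F - 1`, the binomial coefficient is `∏_{j=1}^{n} (1 + m / j)`, and every factor is at least
`1 + m / n`.
-/

open Finset

theorem Fintype.card_le_pow_card_of_separating {ι X β : Type*} [Fintype ι] [Fintype X]
    [Fintype β] (g : ι → X → β) (hsep : ∀ x y, x ≠ y → ∃ i, g i x ≠ g i y) :
    Fintype.card X ≤ Fintype.card β ^ Fintype.card ι := by
  classical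
  have hinj : Function.Injective fun x i => g i x := by
    intro x y hxy
    by_contra hne
    obtain ⟨i, hi⟩ := hsep x y hne
    exact hi (congrFun hxy i)
  simpa only [Fintype.card_fun] using Fintype.card_le_of_injective _ hinj

theorem Nat.cast_add_choose_eq_prod {K : Type*} [Field K] [CharZero K] (m n : ℕ) :
    ((m + n).choose n : K) = ∏ j ∈ range n, (1 + m / (j + 1 : K)) := by
  induction n with
  | zero => simp
  | succ n ih =>
    have hsucc : ((m + n + 1).choose (n + 1) : K) * (n + 1) = (m + n + 1) * (m + n).choose n :=
      mod_cast (Nat.add_one_mul_choose_eq (m + n) n).symm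
    rw [prod_range_succ, ← ih, ← add_assoc]
    field_simp
    linear_combination hsucc

theorem one_add_div_pow_le_add_choose {K : Type*} [Field K] [LinearOrder K]
    [IsStrictOrderedRing K] (m n : ℕ) :
    (1 + m / n : K) ^ n ≤ (m + n).choose n := by
  rw [Nat.cast_add_choose_eq_prod]
  calc (1 + m / n : K) ^ n = ∏ _j ∈ range n, (1 + m / n : K) := by rw [prod_const, card_range]
    _ ≤ ∏ j ∈ range n, (1 + m / (j + 1 : K)) := by
      refine prod_le_prod (fun _ _ => by positivity) fun j hj => ?_
      have hjn : (j + 1 : K) ≤ n := by exact_mod_cast mem_range.1 hj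
      gcongr

theorem separating_family_lower_bound_general
    (F n : ℕ) (hF : 2 ≤ F)
    (R : Type*) (f : {S : Multiset (Fin F) // Multiset.card S ≤ n} → R)
    (Φ : Finset (R → Fin F))
    (hsep : ∀ A B : {S : Multiset (Fin F) // Multiset.card S ≤ n},
      A ≠ B → ∃ φ ∈ Φ, φ (f A) ≠ φ (f B)) :
    (1 + ((F : ℝ) - 1) / n) ^ n ≤ (F : ℝ) ^ Φ.card := by
  obtain ⟨m, rfl⟩ : ∃ m, F = m + 1 := ⟨F - 1, by omega⟩
  have hcard := Fintype.card_le_pow_card_of_separating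
    (fun (φ : Φ) (s : Sym (Fin (m + 1)) n) => φ.1 (f ⟨s, s.2.le⟩)) fun s t hst => by
      obtain ⟨φ, hφ, hne⟩ := hsep ⟨s, s.2.le⟩ ⟨t, t.2.le⟩ fun h =>
        hst (Sym.coe_injective (Subtype.mk.inj h))
      exact ⟨⟨φ, hφ⟩, hne⟩
  rw [Sym.card_sym_eq_choose, Fintype.card_fin, Fintype.card_coe, Nat.add_right_comm,
    Nat.add_sub_cancel] at hcard
  calc (1 + (((m + 1 : ℕ) : ℝ) - 1) / n) ^ n = (1 + m / n) ^ n := by push_cast; ring_nf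
    _ ≤ (m + n).choose n := one_add_div_pow_le_add_choose m n
    _ ≤ ((m + 1 : ℕ) : ℝ) ^ Φ.card := mod_cast hcard

/-- If a finite family `Φ` of functions `R → {0,…,F−1}` separates (through an
aggregation function `f`) every pair of distinct multisets over `{0,…,F−1}` of cardinality at
most `n`, then `F^{|Φ|} ≥ (1 + (F−1)/n)^n`. -/
theorem separating_family_lower_bound
    (F n : ℕ) (hF : 2 ≤ F) (hn : 1 ≤ n)
    (R : Type*) (f : {S : Multiset (Fin F) // Multiset.card S ≤ n} → R)
    (Φ : Finset (R → Fin F))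
    (hsep : ∀ A B : {S : Multiset (Fin F) // Multiset.card S ≤ n},
      A ≠ B → ∃ φ ∈ Φ, φ (f A) ≠ φ (f B)) :
    (1 + ((F : ℝ) - 1) / n) ^ n ≤ (F : ℝ) ^ Φ.card :=
  separating_family_lower_bound_general F n hF R f Φ hsep
end

section
/- Let m ≥ 1, let M be a finite type, and let O be a countable type. Let f : {1,…,m} → PMF(M) and g : M → PMF(O) be arbitrary (randomized) functions, and for each k define the output distribution p_k = (f k).bind g on O. Suppose that (i) for every k, Σ_{o∈O} p_k(o)^2 ≥ 3/4 (two independent runs for input k agree with probability at least 3/4), and (ii) for every k ≠ ℓ, Σ_{o∈O} p_k(o)·p_ℓ(o) ≤ 1/4 (independent runs for distinct inputs k and ℓ agree with probability at most 1/4). Then the cardinality of M is at least m. -/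
/-!
Let `pₖ = (f k).bind g`. Averaging over the message shows that for each input `k` some message
`xₖ` satisfies `⟨g xₖ, pₖ⟩ ≥ ⟨pₖ, pₖ⟩ ≥ 3/4`. For distributions `q, p, p'`, the pointwise
inequality `b + c ≤ b c + 1` on `[0, 1]` gives `⟨q, p⟩ + ⟨q, p'⟩ ≤ ⟨p, p'⟩ + 1`; so if two inputs
`k ≠ l` shared a message we would get `3/4 + 3/4 ≤ 1/4 + 1`. Hence `k ↦ xₖ` is injective.
-/

open scoped ENNReal

lemma ENNReal.add_le_mul_add_one {b c : ℝ≥0∞} (hb : b ≤ 1) (hc : c ≤ 1) :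
    b + c ≤ b * c + 1 := by
  lift b to NNReal using ne_top_of_le_ne_top one_ne_top hb
  lift c to NNReal using ne_top_of_le_ne_top one_ne_top hc
  norm_cast at *
  rw [← NNReal.coe_le_coe] at *
  push_cast at *
  nlinarith [mul_nonneg (sub_nonneg.2 hb) (sub_nonneg.2 hc)]

namespace PMF

variable {α β : Type*}

lemma tsum_bind_mul (μ : PMF α) (g : α → PMF β) (ν : β → ℝ≥0∞) :
    ∑' b, μ.bind g b * ν b = ∑' a, μ a * ∑' b, g a b * ν b := by
  simp_rw [bind_apply, ← ENNReal.tsum_mul_right, ← ENNReal.tsum_mul_left, mul_assoc]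
  exact ENNReal.tsum_comm

lemma exists_le_of_le_tsum_mul [Fintype α] (μ : PMF α) {a : α → ℝ≥0∞} {c : ℝ≥0∞}
    (h : c ≤ ∑' x, μ x * a x) : ∃ x, c ≤ a x := by
  have : Nonempty α := μ.support_nonempty.to_subtype.map Subtype.val
  obtain ⟨x₀, -, hx₀⟩ := Finset.univ.exists_max_image a Finset.univ_nonempty
  refine ⟨x₀, h.trans ?_⟩
  calc ∑' x, μ x * a x ≤ ∑' x, μ x * a x₀ :=
        ENNReal.tsum_le_tsum fun x => mul_le_mul_right (hx₀ x (Finset.mem_univ x)) _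
    _ = a x₀ := by rw [ENNReal.tsum_mul_right, μ.tsum_coe, one_mul]

lemma tsum_mul_add_tsum_mul_le (q p p' : PMF α) :
    ∑' x, q x * p x + ∑' x, q x * p' x ≤ ∑' x, p x * p' x + 1 := by
  calc ∑' x, q x * p x + ∑' x, q x * p' x = ∑' x, q x * (p x + p' x) := by
        rw [← ENNReal.tsum_add]; simp_rw [mul_add]
    _ ≤ ∑' x, (p x * p' x + q x) :=
        ENNReal.tsum_le_tsum fun x => calc
          q x * (p x + p' x) ≤ q x * (p x * p' x + 1) :=
            mul_le_mul_right (ENNReal.add_le_mul_add_one (p.coe_le_one x) (p'.coe_le_one x)) _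
          _ ≤ p x * p' x + q x := by
            rw [mul_add, mul_one]
            exact add_le_add_left (mul_le_of_le_one_left' (q.coe_le_one x)) _
    _ = ∑' x, p x * p' x + 1 := by rw [ENNReal.tsum_add, q.tsum_coe]

end PMF

theorem randomized_message_lower_bound_general
    (m : ℕ) (M : Type*) [Fintype M] (O : Type*)
    (f : Fin m → PMF M) (g : M → PMF O)
    (hsame : ∀ k : Fin m, (3 : ℝ≥0∞) / 4 ≤ ∑' o : O, ((f k).bind g) o * ((f k).bind g) o)
    (hdiff : ∀ k l : Fin m, k ≠ l →
      ∑' o : O, ((f k).bind g) o * ((f l).bind g) o ≤ (1 : ℝ≥0∞) / 4) :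
    m ≤ Fintype.card M := by
  have hmsg (k : Fin m) : ∃ x, 3 / 4 ≤ ∑' o, g x o * (f k).bind g o :=
    (f k).exists_le_of_le_tsum_mul ((hsame k).trans_eq ((f k).tsum_bind_mul g _))
  choose msg hmsg using hmsg
  have hinj : Function.Injective msg := by
    intro k l hkl
    by_contra hkl'
    have hoverlap := (g (msg k)).tsum_mul_add_tsum_mul_le ((f k).bind g) ((f l).bind g)
    have hl := hmsg l
    rw [← hkl] at hl
    have key := (add_le_add (hmsg k) hl).trans (hoverlap.trans (add_le_add_left (hdiff k l hkl') 1))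
    have := ENNReal.toReal_mono (by finiteness) key
    rw [ENNReal.toReal_add (by finiteness) (by finiteness),
      ENNReal.toReal_add (by finiteness) (by finiteness)] at this
    norm_num [ENNReal.toReal_div] at this
  simpa using Fintype.card_le_of_injective msg hinj

/-- Randomized one-way communication lower bound. If `f : {1,…,m} → PMF M` and
`g : M → PMF O` are such that two independent runs on the same input agree with probability
at least `3/4`, while independent runs on distinct inputs agree with probability at most
`1/4`, then `|M| ≥ m`. -/
theorem randomized_message_lower_bound
    (m : ℕ) (hm : 1 ≤ m) (M : Type*) [Fintype M] (O : Type*) [Countable O]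
    (f : Fin m → PMF M) (g : M → PMF O)
    (hsame : ∀ k : Fin m, (3 : ℝ≥0∞) / 4 ≤ ∑' o : O, ((f k).bind g) o * ((f k).bind g) o)
    (hdiff : ∀ k l : Fin m, k ≠ l →
      ∑' o : O, ((f k).bind g) o * ((f l).bind g) o ≤ (1 : ℝ≥0∞) / 4) :
    m ≤ Fintype.card M :=
  randomized_message_lower_bound_general m M O f g hsame hdiff
end

section
/- Let t ≥ 1 and F ≥ 3 be integers, let ℓ = ⌊F/3⌋, and let R_1, …, R_N be convex subsets of ℝ^t that partition the cube [0, F−1]^t. For each integer a with 0 ≤ a < ℓ and each b ∈ {0,1,…,F−1}^{t−1}, let L_{a,b} ⊆ ℝ^t denote the closed line segment joining the points (3a, b) and (3a+2, b). Then the number of pairs (a, b) for which L_{a,b} is not entirely contained in a single part R_i is at most 2N·F^{t−1}. -/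
/-!
For a bad pair `(a, b)`, let `R i` be a part containing the left endpoint `(3a, b)`. The slice
of `R i` on the line through `L_{a,b}` is an interval of `ℝ` that starts inside `[3a, 3a + 2]` but
does not contain all of it, so its supremum lies in `[3a, 3a + 2]`. Since these intervals are
disjoint for distinct `a`, the pair `(i, b)` determines `a`; hence there are at most `N·F^{t-1}`
bad pairs.
-/

open Set

theorem sSup_mem_Icc_of_not_Icc_subset {α : Type*} [ConditionallyCompleteLinearOrder α]
    {T : Set α} {u w : α} (hT : T.OrdConnected) (hu : u ∈ T) (hnot : ¬ Icc u w ⊆ T) :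
    sSup T ∈ Icc u w := by
  obtain ⟨y, hy, hyT⟩ := not_subset.mp hnot
  have hbound : ∀ z ∈ T, z ≤ y := fun z hz =>
    le_of_not_gt fun hyz => hyT (hT.out hu hz ⟨hy.1, hyz.le⟩)
  exact ⟨le_csSup ⟨y, hbound⟩ hu, (csSup_le ⟨u, hu⟩ hbound).trans hy.2⟩

theorem segment_subset_iff_Icc_subset_preimage {𝕜 E : Type*} [Field 𝕜] [LinearOrder 𝕜]
    [IsStrictOrderedRing 𝕜] [AddCommGroup E] [Module 𝕜 E] (f : 𝕜 →ᵃ[𝕜] E) {s : Set E}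
    {u w : 𝕜} (huw : u ≤ w) : segment 𝕜 (f u) (f w) ⊆ s ↔ Icc u w ⊆ f ⁻¹' s := by
  rw [← image_segment, segment_eq_Icc huw, image_subset_iff]

theorem exists_sSup_preimage_mem_Icc {ι E : Type*} [AddCommGroup E] [Module ℝ E]
    {R : ι → Set E} (hconv : ∀ i, Convex ℝ (R i)) (f : ℝ →ᵃ[ℝ] E) {u w : ℝ} (huw : u ≤ w)
    (hu : f u ∈ ⋃ i, R i) (hbad : ¬ ∃ i, segment ℝ (f u) (f w) ⊆ R i) :
    ∃ i, sSup (f ⁻¹' R i) ∈ Icc u w := by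
  obtain ⟨i, hi⟩ := mem_iUnion.mp hu
  refine ⟨i, sSup_mem_Icc_of_not_Icc_subset ((hconv i).affine_preimage f).ordConnected hi ?_⟩
  rw [← segment_subset_iff_Icc_subset_preimage f huw]
  exact fun h => hbad ⟨i, h⟩

theorem eq_of_mem_Icc_three_mul {a₁ a₂ : ℕ} {r : ℝ} (h₁ : r ∈ Icc (3 * (a₁ : ℝ)) (3 * a₁ + 2))
    (h₂ : r ∈ Icc (3 * (a₂ : ℝ)) (3 * a₂ + 2)) : a₁ = a₂ := by
  have h₁₂ : (3 * a₁ : ℝ) < 3 * a₂ + 3 := by linarith [h₁.1, h₂.2]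
  have h₂₁ : (3 * a₂ : ℝ) < 3 * a₁ + 3 := by linarith [h₂.1, h₁.2]
  norm_cast at h₁₂ h₂₁
  omega

theorem ncard_le_of_forall_exists_mem_Icc_three_mul {ι β : Type*} [Finite ι] [Finite β]
    {s : Set (ℕ × β)} (σ : ι → β → ℝ)
    (h : ∀ ab ∈ s, ∃ i, σ i ab.2 ∈ Icc (3 * (ab.1 : ℝ)) (3 * ab.1 + 2)) :
    s.ncard ≤ Nat.card ι * Nat.card β := by
  choose φ hφ using h
  rw [← Nat.card_coe_set_eq, ← Nat.card_prod]
  refine Nat.card_le_card_of_injective (fun ab => (φ ab.1 ab.2, ab.1.2)) ?_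
  rintro ⟨⟨a₁, b⟩, h₁⟩ ⟨⟨a₂, b₂⟩, h₂⟩ he
  obtain ⟨hi, rfl⟩ := Prod.mk.inj he
  have ha := eq_of_mem_Icc_three_mul (hφ _ h₁) (hi ▸ hφ _ h₂)
  subst ha
  rfl

noncomputable def consLine {n : ℕ} (b : Fin n → ℝ) : ℝ →ᵃ[ℝ] (Fin (n + 1) → ℝ) :=
  AffineMap.lineMap (Fin.cons 0 b) (Fin.cons 1 b)

@[simp]
theorem consLine_apply {n : ℕ} (b : Fin n → ℝ) (s : ℝ) :
    consLine b s = (Fin.cons s b : Fin (n + 1) → ℝ) := by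
  ext j
  refine Fin.cases ?_ (fun j => ?_) j <;> simp [consLine, AffineMap.lineMap_apply]

theorem cons_mem_Icc_const {α : Type*} [Preorder α] {n : ℕ} {x lo hi : α} {b : Fin n → α}
    (hx : x ∈ Icc lo hi) (hb : ∀ j, b j ∈ Icc lo hi) :
    (Fin.cons x b : Fin (n + 1) → α) ∈ Icc (fun _ => lo) (fun _ => hi) := by
  simp only [mem_Icc, Pi.le_def, Fin.forall_fin_succ, Fin.cons_zero, Fin.cons_succ]
  exact ⟨⟨hx.1, fun j => (hb j).1⟩, hx.2, fun j => (hb j).2⟩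

theorem bad_segments_count_le_general
    (t' F N : ℕ)
    (R : Fin N → Set (Fin (t' + 1) → ℝ))
    (hconv : ∀ i, Convex ℝ (R i))
    (hcover : Set.Icc (0 : Fin (t' + 1) → ℝ) (fun _ => (F : ℝ) - 1) ⊆ ⋃ i, R i) :
    {ab : ℕ × (Fin t' → Fin F) | ab.1 < F / 3 ∧
        ¬ ∃ i : Fin N,
          segment ℝ
            (Fin.cons (3 * (ab.1 : ℝ)) (fun j => ((ab.2 j : ℕ) : ℝ)) : Fin (t' + 1) → ℝ)
            (Fin.cons (3 * (ab.1 : ℝ) + 2) (fun j => ((ab.2 j : ℕ) : ℝ)) : Fin (t' + 1) → ℝ)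
          ⊆ R i}.ncard
      ≤ 2 * N * F ^ t' := by
  let σ (i : Fin N) (b : Fin t' → Fin F) : ℝ :=
    sSup (consLine (fun j => ((b j : ℕ) : ℝ)) ⁻¹' R i)
  refine (ncard_le_of_forall_exists_mem_Icc_three_mul σ ?_).trans ?_
  · rintro ⟨a, b⟩ ⟨ha, hbad⟩
    have haF : (3 * a + 3 : ℝ) ≤ F := by exact_mod_cast (by omega : 3 * a + 3 ≤ F)
    have hstart : (Fin.cons (3 * (a : ℝ)) (fun j => ((b j : ℕ) : ℝ)) : Fin (t' + 1) → ℝ)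
        ∈ Icc 0 (fun _ => (F : ℝ) - 1) := by
      refine cons_mem_Icc_const ⟨by positivity, by linarith⟩ fun j => ⟨by positivity, ?_⟩
      have : ((b j : ℕ) : ℝ) + 1 ≤ F := by exact_mod_cast (b j).isLt
      linarith
    refine exists_sSup_preimage_mem_Icc hconv _ (by linarith) ?_ ?_
    · simpa only [consLine_apply] using hcover hstart
    · simpa only [consLine_apply] using hbad
  · simp only [Nat.card_eq_fintype_card, Fintype.card_fin, Fintype.card_fun, mul_assoc]
    exact Nat.le_mul_of_pos_left _ two_pos

/-- Let `t = t' + 1 ≥ 1`, `F ≥ 3`, `ℓ = ⌊F/3⌋`, and let `R_1, …, R_N` be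
pairwise disjoint convex subsets of `ℝ^t` whose union contains the cube `[0, F−1]^t`.
For `0 ≤ a < ℓ` and `b ∈ {0,…,F−1}^{t−1}`, let `L_{a,b}` be the closed segment joining
`(3a, b)` to `(3a+2, b)`. Then the number of pairs `(a, b)` such that `L_{a,b}` is not
contained in a single part `R_i` is at most `2·N·F^{t−1}`. -/
theorem bad_segments_count_le
    (t' F N : ℕ) (hF : 3 ≤ F)
    (R : Fin N → Set (Fin (t' + 1) → ℝ))
    (hconv : ∀ i, Convex ℝ (R i))
    (hdisj : ∀ i j, i ≠ j → Disjoint (R i) (R j))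
    (hcover : Set.Icc (0 : Fin (t' + 1) → ℝ) (fun _ => (F : ℝ) - 1) ⊆ ⋃ i, R i) :
    {ab : ℕ × (Fin t' → Fin F) | ab.1 < F / 3 ∧
        ¬ ∃ i : Fin N,
          segment ℝ
            (Fin.cons (3 * (ab.1 : ℝ)) (fun j => ((ab.2 j : ℕ) : ℝ)) : Fin (t' + 1) → ℝ)
            (Fin.cons (3 * (ab.1 : ℝ) + 2) (fun j => ((ab.2 j : ℕ) : ℝ)) : Fin (t' + 1) → ℝ)
          ⊆ R i}.ncard
      ≤ 2 * N * F ^ t' :=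
  bad_segments_count_le_general t' F N R hconv hcover
end
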